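/- Let D be a complete, cocomplete, extremally co-well-powered, (extremal epi, mono) category. Let {(X_i, Q_i)}_{i∈I} be a class of reduced projectively filtered objects of D and let (X, (f_i)_{i∈I}) be a source for the underlying objects (so f_i : X → X_i in D). Then there is a reduced projective filtration Q' on X (namely the reduction of the smallest projective filtration containing the union of the pull backs f_i*(Q_i)) such that: (1) each f_i lifts to a QD-morphism (X, Q') → (X_i, Q_i); and (2) for every reduced projectively filtered object (Y, Q'') and every morphism h : Y → X of D, h lifts to a QD-morphism (Y, Q'') → (X, Q') if and only if each f_i ∘ h lifts to a QD-morphism (Y, Q'') → (X_i, Q_i). -/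

import Mathlib

open CategoryTheory CategoryTheory.Limits

universe w v u v₂ u₂

namespace FilteredCats

variable {D : Type u} [Category.{v} D]

/-- The class of morphisms of `D` with source `X`. -/
def MorFrom (X : D) : Type (max u v) := Σ Y : D, X ⟶ Y

/-- `Dom δ₁ δ₂` means `δ₁ ≥ δ₂`: there is `h` with `h ∘ δ₁ = δ₂`. -/
def Dom {X : D} (δ₁ δ₂ : MorFrom X) : Prop :=
  ∃ h : δ₁.1 ⟶ δ₂.1, δ₁.2 ≫ h = δ₂.2

/-- A projective filtration on `X`: a nonempty, directed, saturated class of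
morphisms with source `X`. -/
structure ProjFilt (X : D) where
  carrier : Set (MorFrom X)
  nonempty' : carrier.Nonempty
  directed' : ∀ δ₁ ∈ carrier, ∀ δ₂ ∈ carrier, ∃ δ ∈ carrier, Dom δ δ₁ ∧ Dom δ δ₂
  saturated' : ∀ δ₁ ∈ carrier, ∀ δ₂, Dom δ₁ δ₂ → δ₂ ∈ carrier

/-- The pull back of a set of morphisms with source `X` along `f : X' ⟶ X`. -/
def pullSet {X' X : D} (f : X' ⟶ X) (S : Set (MorFrom X)) : Set (MorFrom X') :=
  {δ' | ∃ δ ∈ S, δ' = ⟨δ.1, f ≫ δ.2⟩}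

/-- The pull back of a projective filtration along `f : X' ⟶ X`. -/
def ProjFilt.pull {X' X : D} (f : X' ⟶ X) (P : ProjFilt X) : ProjFilt X' where
  carrier := pullSet f P.carrier
  nonempty' := by
    obtain ⟨δ, hδ⟩ := P.nonempty'
    exact ⟨⟨δ.1, f ≫ δ.2⟩, δ, hδ, rfl⟩
  directed' := by
    rintro _ ⟨δ₁, h₁, rfl⟩ _ ⟨δ₂, h₂, rfl⟩
    obtain ⟨δ, hδ, ⟨g₁, hg₁⟩, ⟨g₂, hg₂⟩⟩ := P.directed' δ₁ h₁ δ₂ h₂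
    exact ⟨⟨δ.1, f ≫ δ.2⟩, ⟨δ, hδ, rfl⟩,
      ⟨g₁, by simp [hg₁]⟩, ⟨g₂, by simp [hg₂]⟩⟩
  saturated' := by
    rintro _ ⟨δ, hδ, rfl⟩ δ₂ ⟨h, hh⟩
    refine ⟨⟨δ₂.1, δ.2 ≫ h⟩, P.saturated' δ hδ _ ⟨h, rfl⟩, ?_⟩
    obtain ⟨Y₂, g₂⟩ := δ₂
    have hg : g₂ = f ≫ (δ.2 ≫ h) := by simpa using hh.symm
    exact Sigma.ext rfl (heq_of_eq hg)

/-- A projectively filtered object of `D`. -/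
structure PObj (D : Type u) [Category.{v} D] where
  base : D
  filt : ProjFilt base

/-- A morphism of projectively filtered objects: a morphism of the underlying
objects such that the pull back of the target filtration is contained in the
source filtration. -/
structure PHom (A B : PObj D) : Type v where
  toHom : A.base ⟶ B.base
  mem : ∀ δ ∈ B.filt.carrier, (⟨δ.1, toHom ≫ δ.2⟩ : MorFrom A.base) ∈ A.filt.carrier

theorem PHom.ext' {A B : PObj D} {f g : PHom A B} (h : f.toHom = g.toHom) : f = g := by
  cases f; cases g; cases h; rfl

instance : Category.{v} (PObj D) where
  Hom := PHom
  id A := ⟨𝟙 A.base, fun δ hδ => by simp only [Category.id_comp]; exact hδ⟩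
  comp {A B C} f g := ⟨f.toHom ≫ g.toHom, fun δ hδ => by
    have h1 := g.mem δ hδ
    have h2 := f.mem _ h1
    simpa using h2⟩
  id_comp f := PHom.ext' (Category.id_comp _)
  comp_id f := PHom.ext' (Category.comp_id _)
  assoc f g h := PHom.ext' (Category.assoc _ _ _)

@[simp] theorem PObj.id_toHom (A : PObj D) : PHom.toHom (𝟙 A) = 𝟙 A.base := rfl
@[simp] theorem PObj.comp_toHom {A B C : PObj D} (f : A ⟶ B) (g : B ⟶ C) :
    PHom.toHom (f ≫ g) = PHom.toHom f ≫ PHom.toHom g := rfl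

/-- The forgetful functor `PD → D`. -/
def Pforget (D : Type u) [Category.{v} D] : PObj D ⥤ D where
  obj A := A.base
  map f := PHom.toHom f

/-- The discrete filtration functor `D → PD`, `X ↦ (X, M(X))`. -/
def Pdiscrete (D : Type u) [Category.{v} D] : D ⥤ PObj D where
  obj X :=
    { base := X
      filt :=
        { carrier := Set.univ
          nonempty' := ⟨⟨X, 𝟙 X⟩, trivial⟩
          directed' := fun δ₁ _ δ₂ _ =>
            ⟨⟨X, 𝟙 X⟩, trivial, ⟨δ₁.2, Category.id_comp _⟩, ⟨δ₂.2, Category.id_comp _⟩⟩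
          saturated' := fun _ _ _ _ => trivial } }
  map f := ⟨f, fun _ _ => trivial⟩

/-- The functor `PD → PE` induced by a functor `G : D → E`. -/
def Pfunctor {E : Type u₂} [Category.{v₂} E] (G : D ⥤ E) : PObj D ⥤ PObj E where
  obj A :=
    { base := G.obj A.base
      filt :=
        { carrier := {δ' | ∃ δ ∈ A.filt.carrier,
            Dom (⟨G.obj δ.1, G.map δ.2⟩ : MorFrom (G.obj A.base)) δ'}
          nonempty' := by
            obtain ⟨δ, hδ⟩ := A.filt.nonempty'
            exact ⟨⟨G.obj δ.1, G.map δ.2⟩, δ, hδ, ⟨𝟙 _, Category.comp_id _⟩⟩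
          directed' := by
            rintro δ'₁ ⟨δ₁, h₁, g₁, hg₁⟩ δ'₂ ⟨δ₂, h₂, g₂, hg₂⟩
            obtain ⟨δ, hδ, ⟨k₁, hk₁⟩, ⟨k₂, hk₂⟩⟩ := A.filt.directed' δ₁ h₁ δ₂ h₂
            refine ⟨⟨G.obj δ.1, G.map δ.2⟩, ⟨δ, hδ, ⟨𝟙 _, Category.comp_id _⟩⟩,
              ⟨G.map k₁ ≫ g₁, ?_⟩, ⟨G.map k₂ ≫ g₂, ?_⟩⟩
            · rw [← Category.assoc, ← G.map_comp, hk₁, hg₁]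
            · rw [← Category.assoc, ← G.map_comp, hk₂, hg₂]
          saturated' := by
            rintro δ'₁ ⟨δ, hδ, g, hg⟩ δ'₂ ⟨h, hh⟩
            exact ⟨δ, hδ, ⟨g ≫ h, by rw [← Category.assoc, hg, hh]⟩⟩ } }
  map {A B} f :=
    ⟨G.map (PHom.toHom f), by
      rintro δ' ⟨δ, hδ, g, hg⟩
      exact ⟨⟨δ.1, PHom.toHom f ≫ δ.2⟩, f.mem δ hδ,
        ⟨g, by rw [← hg, ← Category.assoc, ← G.map_comp]⟩⟩⟩
  map_id A := PHom.ext' (G.map_id _)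
  map_comp f g := PHom.ext' (G.map_comp _ _)

/-- An extremal epimorphism: an epimorphism such that in any factorisation
through a monomorphism, the monomorphism is an isomorphism. -/
def ExtremalEpi {C : Type u₂} [Category.{v₂} C] {X Y : C} (e : X ⟶ Y) : Prop :=
  Epi e ∧ ∀ ⦃Z : C⦄ (g : X ⟶ Z) (m : Z ⟶ Y), Mono m → g ≫ m = e → IsIso m

/-- An (extremal epi, mono) category: every morphism factors as an extremal
epimorphism followed by a monomorphism and such factorisations have the
diagonal fill-in property. -/
structure EMCat (C : Type u₂) [Category.{v₂} C] : Prop where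
  fact : ∀ {X Y : C} (f : X ⟶ Y), ∃ (Z : C) (e : X ⟶ Z) (m : Z ⟶ Y),
    ExtremalEpi e ∧ Mono m ∧ e ≫ m = f
  diag : ∀ {A B Z X : C} (e : A ⟶ B) (m : Z ⟶ X) (g : A ⟶ Z) (h : B ⟶ X),
    ExtremalEpi e → Mono m → g ≫ m = e ≫ h → ∃ d : B ⟶ Z, e ≫ d = g ∧ d ≫ m = h

/-- A projective filtration is reduced if it has an initial subclass of
extremal epimorphisms. -/
def ProjFilt.Reduced {X : D} (P : ProjFilt X) : Prop :=
  ∀ δ ∈ P.carrier, ∃ ε ∈ P.carrier, ExtremalEpi ε.2 ∧ Dom ε δ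

/-- The category of reduced projectively filtered objects of `D`. -/
def QObj (D : Type u) [Category.{v} D] :=
  ObjectProperty.FullSubcategory (fun A : PObj D => A.filt.Reduced)

instance : Category.{v} (QObj D) where
  Hom X Y := X.obj ⟶ Y.obj
  id X := 𝟙 X.obj
  comp f g := f ≫ g

/-- The inclusion functor `QD → PD`. -/
def qpInclusion (D : Type u) [Category.{v} D] : QObj D ⥤ PObj D where
  obj X := X.obj
  map f := f

/-- A category is extremally co-well-powered if every object has, up to
isomorphism, only a (small) set of extremal epimorphisms out of it. -/
def ECWP (C : Type u₂) [Category.{v₂} C] : Prop :=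
  ∀ X : C, ∃ (ι : Type v₂) (Y : ι → C) (e : ∀ i, X ⟶ Y i),
    (∀ i, ExtremalEpi (e i)) ∧
    ∀ ⦃Z : C⦄ (f : X ⟶ Z), ExtremalEpi f → ∃ (i : ι) (φ : Y i ≅ Z), e i ≫ φ.hom = f

/-- The category `(P, D)` associated to a projective filtration: objects are the
elements of `P`, morphisms `δ₁ → δ₂` are morphisms `g` of `D` with `g ∘ δ₁ = δ₂`. -/
def FiltCat {X : D} (P : ProjFilt X) : Type (max u v) := {δ : MorFrom X // δ ∈ P.carrier}

instance {X : D} (P : ProjFilt X) : Category.{v} (FiltCat P) where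
  Hom δ₁ δ₂ := {g : δ₁.1.1 ⟶ δ₂.1.1 // δ₁.1.2 ≫ g = δ₂.1.2}
  id δ := ⟨𝟙 _, Category.comp_id _⟩
  comp f g := ⟨f.1 ≫ g.1, by rw [← Category.assoc, f.2, g.2]⟩
  id_comp f := Subtype.ext (Category.id_comp _)
  comp_id f := Subtype.ext (Category.comp_id _)
  assoc f g h := Subtype.ext (Category.assoc _ _ _)

/-- The functor `(P, D) → D` sending an element of the filtration to its target. -/
def FiltDiagram {X : D} (P : ProjFilt X) : FiltCat P ⥤ D where
  obj δ := δ.1.1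
  map g := g.1

/-- The canonical cone on the diagram of a projective filtration, with apex the
underlying object. -/
def filtCone {X : D} (P : ProjFilt X) : Limits.Cone (FiltDiagram P) where
  pt := X
  π :=
    { app := fun δ => δ.1.2
      naturality := fun δ₁ δ₂ g => by
        have := g.2
        dsimp [FiltDiagram] at *
        simp [this] }

/-- A reduced projective filtration is an iso-filtration if the canonical cone
on its diagram is a limit cone, i.e. the limit exists and the canonical morphism
from the underlying object to it is an isomorphism. -/
def IsoFilt {X : D} (P : ProjFilt X) : Prop :=
  Nonempty (Limits.IsLimit (filtCone P))

/-- The category of iso-filtered objects of `D`. -/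
def KObj (D : Type u) [Category.{v} D] :=
  ObjectProperty.FullSubcategory (fun A : QObj D => IsoFilt A.obj.filt)

instance : Category.{v} (KObj D) where
  Hom X Y := X.obj ⟶ Y.obj
  id X := 𝟙 X.obj
  comp f g := f ≫ g

/-- The inclusion functor `KD → QD`. -/
def kqInclusion (D : Type u) [Category.{v} D] : KObj D ⥤ QObj D where
  obj X := X.obj
  map f := f

/-- The forgetful functor `KD → D`. -/
def Kforget (D : Type u) [Category.{v} D] : KObj D ⥤ D :=
  kqInclusion D ⋙ qpInclusion D ⋙ Pforget D

/-- The smallest projective filtration containing a class of morphisms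
(as a class). -/
def genSet {X : D} (S : Set (MorFrom X)) : Set (MorFrom X) :=
  {δ | ∀ P : ProjFilt X, S ⊆ P.carrier → δ ∈ P.carrier}

/-- The reduction of a class of morphisms: the saturation of the class of
extremal epimorphism parts of (extremal epi, mono)-factorisations of its
elements. -/
def redSet {X : D} (S : Set (MorFrom X)) : Set (MorFrom X) :=
  {δ | ∃ ε : MorFrom X, ExtremalEpi ε.2 ∧
    (∃ δ' ∈ S, ∃ m : ε.1 ⟶ δ'.1, Mono m ∧ ε.2 ≫ m = δ'.2) ∧ Dom ε δ}

/-- The push forward of a filtration class along `f` (single morphism case). -/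
def pushSet {X Y : D} (f : X ⟶ Y) (S : Set (MorFrom X)) : Set (MorFrom Y) :=
  {g | (⟨g.1, f ≫ g.2⟩ : MorFrom X) ∈ S}

/-- The discrete filtration on an object, as an iso-filtered object. -/
def kDiscreteObj (X : D) : KObj D where
  obj :=
    { obj := (Pdiscrete D).obj X
      property := fun δ _ => ⟨⟨X, 𝟙 X⟩, trivial,
        ⟨(inferInstance : Epi (𝟙 X)), fun _ g m hm hgm => by
          haveI : IsSplitEpi m := ⟨⟨⟨g, hgm⟩⟩⟩
          exact isIso_of_mono_of_isSplitEpi m⟩,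
        ⟨δ.2, Category.id_comp _⟩⟩ }
  property := ⟨{
    lift := fun c => c.π.app ⟨⟨X, 𝟙 X⟩, trivial⟩
    fac := fun c j => by
      have h := c.π.naturality (X := ⟨⟨X, 𝟙 X⟩, trivial⟩) (Y := j)
        ⟨j.1.2, Category.id_comp _⟩
      dsimp [FiltDiagram, filtCone] at h ⊢
      first
        | exact ((Category.id_comp (c.π.app j)).symm.trans h).symm
        | simpa [Functor.const_obj_map] using h.symm
    uniq := fun c m hm => by
      have h := hm ⟨⟨X, 𝟙 X⟩, trivial⟩
      rw [← Category.comp_id m]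
      exact h }⟩

/-- The discrete filtration functor `D → KD`. -/
def kDiscrete (D : Type u) [Category.{v} D] : D ⥤ KObj D where
  obj X := kDiscreteObj X
  map f := ⟨f, fun _ _ => trivial⟩
  map_id _ := PHom.ext' rfl
  map_comp _ _ := PHom.ext' rfl

/-- The morphism in `KD` from an iso-filtered object to the discrete object on
the target of an element of its filtration. -/
def kToDiscrete {A : KObj D} (δ : MorFrom A.obj.obj.base)
    (hδ : δ ∈ A.obj.obj.filt.carrier) : A ⟶ kDiscreteObj δ.1 :=
  show PHom A.obj.obj ((kDiscreteObj δ.1).obj.obj) from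
    ⟨δ.2, fun γ _ => A.obj.obj.filt.saturated' δ hδ _ ⟨γ.2, rfl⟩⟩

/-- The natural transformation `P(G) → P(H)` induced by `ν : G → H`. -/
def Pnat {E : Type u₂} [Category.{v₂} E] {G H : D ⥤ E} (ν : G ⟶ H) :
    Pfunctor G ⟶ Pfunctor H where
  app A :=
    ⟨ν.app A.base, by
      rintro δ' ⟨δ, hδ, g, hg⟩
      exact ⟨δ, hδ, ⟨ν.app δ.1 ≫ g, by
        rw [← Category.assoc, ν.naturality, Category.assoc, hg]; rfl⟩⟩⟩
  naturality {A B} f := PHom.ext' (ν.naturality (PHom.toHom f))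


/-! A projective filtration `Q''` on `Y` contains `h*(P)` for the filtration `P` generated by `S`
as soon as it contains `h*(S)`, because `{δ | δ ∘ h ∈ Q''}` is itself a projective filtration
(the terminal object and binary products make it nonempty and directed). Passing to the
reduction of `P` costs nothing when `Q''` is reduced: if `δ = m ∘ ε` with `ε` an extremal
epimorphism and `m` a monomorphism, then `δ ∘ h` is dominated by an extremal epimorphism `ε''`
of `Q''`, and the diagonal fill-in of `ε''` against `m` shows `ε'' ≥ ε ∘ h`. -/

section

variable {X : D}

theorem Dom.refl (δ : MorFrom X) : Dom δ δ :=
  ⟨𝟙 _, Category.comp_id _⟩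

theorem Dom.trans {a b c : MorFrom X} (hab : Dom a b) (hbc : Dom b c) : Dom a c := by
  obtain ⟨g, hg⟩ := hab
  obtain ⟨k, hk⟩ := hbc
  exact ⟨g ≫ k, by rw [← Category.assoc, hg, hk]⟩

theorem EMCat.dom_of_comp_eq_comp_mono (hEM : EMCat D) {Z W : D} {e : X ⟶ Z}
    (he : ExtremalEpi e) {δ : MorFrom X} {m : δ.1 ⟶ W} (hm : Mono m) {g : Z ⟶ W}
    (hw : e ≫ g = δ.2 ≫ m) : Dom ⟨Z, e⟩ δ :=
  let ⟨d, hd, _⟩ := hEM.diag e m δ.2 g he hm hw.symm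
  ⟨d, hd⟩

theorem ProjFilt.terminal_mem [HasTerminal D] (P : ProjFilt X) :
    (⟨⊤_ D, terminal.from X⟩ : MorFrom X) ∈ P.carrier := by
  obtain ⟨δ, hδ⟩ := P.nonempty'
  exact P.saturated' δ hδ _ ⟨terminal.from δ.1, terminal.comp_from _⟩

theorem ProjFilt.prod_lift_mem [HasBinaryProducts D] (P : ProjFilt X) {δ₁ δ₂ : MorFrom X}
    (h₁ : δ₁ ∈ P.carrier) (h₂ : δ₂ ∈ P.carrier) :
    (⟨δ₁.1 ⨯ δ₂.1, prod.lift δ₁.2 δ₂.2⟩ : MorFrom X) ∈ P.carrier := by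
  obtain ⟨δ, hδ, ⟨k₁, hk₁⟩, ⟨k₂, hk₂⟩⟩ := P.directed' δ₁ h₁ δ₂ h₂
  exact P.saturated' δ hδ _ ⟨prod.lift k₁ k₂, by simp [hk₁, hk₂]⟩

theorem dom_prod_lift_fst [HasBinaryProducts D] (δ₁ δ₂ : MorFrom X) :
    Dom ⟨δ₁.1 ⨯ δ₂.1, prod.lift δ₁.2 δ₂.2⟩ δ₁ :=
  ⟨prod.fst, prod.lift_fst _ _⟩

theorem dom_prod_lift_snd [HasBinaryProducts D] (δ₁ δ₂ : MorFrom X) :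
    Dom ⟨δ₁.1 ⨯ δ₂.1, prod.lift δ₁.2 δ₂.2⟩ δ₂ :=
  ⟨prod.snd, prod.lift_snd _ _⟩

theorem subset_genSet (S : Set (MorFrom X)) : S ⊆ genSet S :=
  fun _ hδ _ hP => hP hδ

theorem genSet_subset {S : Set (MorFrom X)} {P : ProjFilt X} (hS : S ⊆ P.carrier) :
    genSet S ⊆ P.carrier :=
  fun _ hδ => hδ P hS

def genFilt [HasTerminal D] [HasBinaryProducts D] (S : Set (MorFrom X)) : ProjFilt X where
  carrier := genSet S
  nonempty' := ⟨_, fun P _ => P.terminal_mem⟩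
  directed' δ₁ h₁ δ₂ h₂ := ⟨_, fun P hP => P.prod_lift_mem (h₁ P hP) (h₂ P hP),
    dom_prod_lift_fst δ₁ δ₂, dom_prod_lift_snd δ₁ δ₂⟩
  saturated' δ₁ h₁ δ₂ hd P hP := P.saturated' δ₁ (h₁ P hP) δ₂ hd

theorem subset_redSet (hEM : EMCat D) (S : Set (MorFrom X)) : S ⊆ redSet S := by
  intro δ hδ
  obtain ⟨Z, e, m, he, hm, hem⟩ := hEM.fact δ.2
  exact ⟨⟨Z, e⟩, he, ⟨δ, hδ, m, hm, hem⟩, ⟨m, hem⟩⟩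

def redFilt (hEM : EMCat D) (P : ProjFilt X) : ProjFilt X where
  carrier := redSet P.carrier
  nonempty' := P.nonempty'.mono (subset_redSet hEM _)
  directed' := by
    rintro δ₁ ⟨ε₁, -, ⟨δ'₁, hδ'₁, m₁, hm₁, hem₁⟩, hd₁⟩ δ₂ ⟨ε₂, -, ⟨δ'₂, hδ'₂, m₂, hm₂, hem₂⟩, hd₂⟩
    obtain ⟨δ', hδ', ⟨k₁, hk₁⟩, ⟨k₂, hk₂⟩⟩ := P.directed' δ'₁ hδ'₁ δ'₂ hδ'₂
    obtain ⟨Z, e, m, he, hm, hem⟩ := hEM.fact δ'.2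
    refine ⟨⟨Z, e⟩, ⟨⟨Z, e⟩, he, ⟨δ', hδ', m, hm, hem⟩, Dom.refl _⟩, ?_, ?_⟩
    · exact (hEM.dom_of_comp_eq_comp_mono he hm₁ (g := m ≫ k₁)
        (by rw [hem₁, ← hk₁, ← hem, Category.assoc])).trans hd₁
    · exact (hEM.dom_of_comp_eq_comp_mono he hm₂ (g := m ≫ k₂)
        (by rw [hem₂, ← hk₂, ← hem, Category.assoc])).trans hd₂
  saturated' := by
    rintro δ₁ ⟨ε, he, hf, hd⟩ δ₂ hd₂
    exact ⟨ε, he, hf, hd.trans hd₂⟩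

theorem redFilt_reduced (hEM : EMCat D) (P : ProjFilt X) : (redFilt hEM P).Reduced := by
  rintro δ ⟨ε, he, hf, hd⟩
  exact ⟨ε, ⟨ε, he, hf, Dom.refl ε⟩, he, hd⟩

end

section

variable {Y X : D}

def pushFilt [HasTerminal D] [HasBinaryProducts D] (h : Y ⟶ X) (Q : ProjFilt Y) :
    ProjFilt X where
  carrier := pushSet h Q.carrier
  nonempty' := ⟨⟨⊤_ D, terminal.from X⟩, by
    show (⟨_, h ≫ terminal.from X⟩ : MorFrom Y) ∈ Q.carrier
    simpa only [terminal.comp_from] using Q.terminal_mem⟩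
  directed' g₁ h₁ g₂ h₂ := ⟨_, by
    show (⟨_, h ≫ prod.lift g₁.2 g₂.2⟩ : MorFrom Y) ∈ Q.carrier
    simpa only [prod.comp_lift] using Q.prod_lift_mem h₁ h₂,
    dom_prod_lift_fst g₁ g₂, dom_prod_lift_snd g₁ g₂⟩
  saturated' g₁ hg₁ g₂ := fun ⟨k, hk⟩ =>
    Q.saturated' _ hg₁ _ ⟨k, by simp only [Category.assoc, hk]⟩

theorem genSet_subset_pushSet [HasTerminal D] [HasBinaryProducts D] {h : Y ⟶ X}
    {Q : ProjFilt Y} {S : Set (MorFrom X)} (hS : S ⊆ pushSet h Q.carrier) :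
    genSet S ⊆ pushSet h Q.carrier :=
  genSet_subset (P := pushFilt h Q) hS

theorem redSet_subset_pushSet (hEM : EMCat D) {h : Y ⟶ X} {Q : ProjFilt Y} (hQ : Q.Reduced)
    {S : Set (MorFrom X)} (hS : S ⊆ pushSet h Q.carrier) :
    redSet S ⊆ pushSet h Q.carrier := by
  rintro δ ⟨ε, -, ⟨δ', hδ', m, hm, hεm⟩, hεδ⟩
  obtain ⟨ε'', hε''Q, hε'', k, hk⟩ := hQ _ (hS hδ')
  have hε''ε : Dom ε'' ⟨ε.1, h ≫ ε.2⟩ :=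
    hEM.dom_of_comp_eq_comp_mono hε'' hm (by rw [hk, Category.assoc, hεm])
  obtain ⟨g, hg⟩ := hεδ
  exact Q.saturated' _ (Q.saturated' _ hε''Q _ hε''ε) _
    ⟨g, by simp only [Category.assoc, hg]⟩

end

theorem iUnion_pullSet_subset_pushSet_iff {ι : Type w} {Y X : D} (A : ι → PObj D)
    (f : ∀ i, X ⟶ (A i).base) (h : Y ⟶ X) (Q : ProjFilt Y) :
    ⋃ i, pullSet (f i) (A i).filt.carrier ⊆ pushSet h Q.carrier ↔
      ∀ i, ∀ δ ∈ (A i).filt.carrier, (⟨δ.1, (h ≫ f i) ≫ δ.2⟩ : MorFrom Y) ∈ Q.carrier := by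
  constructor
  · intro hS i δ hδ
    rw [Category.assoc]
    exact hS (Set.mem_iUnion.2 ⟨i, δ, hδ, rfl⟩)
  · rintro hQ _ hδ
    obtain ⟨i, δ, hδA, rfl⟩ := Set.mem_iUnion.1 hδ
    show (⟨δ.1, h ≫ f i ≫ δ.2⟩ : MorFrom Y) ∈ Q.carrier
    simpa only [Category.assoc] using hQ i δ hδA

theorem reduced_pull_back_filtration_general [Limits.HasLimits D]
    (hEM : EMCat D)
    {ι : Type w} (A : ι → PObj D)
    (X : D) (f : ∀ i, X ⟶ (A i).base) :
    ∃ Q' : ProjFilt X,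
      Q'.carrier = redSet (genSet (⋃ i, pullSet (f i) (A i).filt.carrier)) ∧
      Q'.Reduced ∧
      (∀ i, ∀ δ ∈ (A i).filt.carrier,
        (⟨δ.1, f i ≫ δ.2⟩ : MorFrom X) ∈ Q'.carrier) ∧
      (∀ (Y : D) (Q'' : ProjFilt Y), Q''.Reduced → ∀ h : Y ⟶ X,
        ((∀ δ ∈ Q'.carrier, (⟨δ.1, h ≫ δ.2⟩ : MorFrom Y) ∈ Q''.carrier) ↔
          (∀ i, ∀ δ ∈ (A i).filt.carrier,
            (⟨δ.1, (h ≫ f i) ≫ δ.2⟩ : MorFrom Y) ∈ Q''.carrier))) := by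
  set S := ⋃ i, pullSet (f i) (A i).filt.carrier
  let Q' := redFilt hEM (genFilt S)
  have hSQ' : S ⊆ Q'.carrier := (subset_genSet S).trans (subset_redSet hEM _)
  refine ⟨Q', rfl, redFilt_reduced hEM _, fun i δ hδ => hSQ' (Set.mem_iUnion.2 ⟨i, δ, hδ, rfl⟩),
    fun Y Q'' hQ'' h => ?_⟩
  rw [← iUnion_pullSet_subset_pushSet_iff]
  exact ⟨hSQ'.trans, fun hS => redSet_subset_pushSet hEM hQ'' (genSet_subset_pushSet hS)⟩

/-- reduced pull back filtrations along a source.  There is a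
reduced projective filtration `Q'` on `X` (the reduction of the smallest
projective filtration containing the union of the pull backs `fᵢ*(Qᵢ)`) such
that each `fᵢ` lifts to a `QD`-morphism `(X,Q') → (Xᵢ,Qᵢ)`, and a morphism
`h : Y → X` from a reduced filtered object lifts to a `QD`-morphism
`(Y,Q'') → (X,Q')` iff each `fᵢ ∘ h` lifts. -/
theorem reduced_pull_back_filtration [Limits.HasLimits D] [Limits.HasColimits D]
    (hecwp : ECWP D) (hEM : EMCat D)
    {ι : Type w} (A : ι → PObj D) (hA : ∀ i, (A i).filt.Reduced)
    (X : D) (f : ∀ i, X ⟶ (A i).base) :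
    ∃ Q' : ProjFilt X,
      Q'.carrier = redSet (genSet (⋃ i, pullSet (f i) (A i).filt.carrier)) ∧
      Q'.Reduced ∧
      (∀ i, ∀ δ ∈ (A i).filt.carrier,
        (⟨δ.1, f i ≫ δ.2⟩ : MorFrom X) ∈ Q'.carrier) ∧
      (∀ (Y : D) (Q'' : ProjFilt Y), Q''.Reduced → ∀ h : Y ⟶ X,
        ((∀ δ ∈ Q'.carrier, (⟨δ.1, h ≫ δ.2⟩ : MorFrom Y) ∈ Q''.carrier) ↔
          (∀ i, ∀ δ ∈ (A i).filt.carrier,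
            (⟨δ.1, (h ≫ f i) ≫ δ.2⟩ : MorFrom Y) ∈ Q''.carrier))) :=
  reduced_pull_back_filtration_general hEM A X f

end FilteredCats
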